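/- Let (J₁,∇₁) and (J₂,∇₂) be almost complex structures with connections on open subsets U, V of ℝ^n, and let f : U → V be a smooth diffeomorphism. Then the cotangent lift f̃ is (J₁^{H,∇₁}, J₂^{H,∇₂})-holomorphic if and only if f is (J₁,J₂)-holomorphic and f_*[∇̃₁J₁] = [∇̃₂J₂], i.e. (d_x f)^k_m [∇̃₁J₁](x)^m_{ij} = [∇̃₂J₂](f(x))^k_{ml}(d_x f)^m_i (d_x f)^l_j for all x ∈ U and all indices i,j,k. -/

import Mathlib

open Matrix BigOperators

noncomputable section

/-- Partial derivative `∂x_i f` at `x`. -/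
def pd {n : ℕ} (f : (Fin n → ℝ) → ℝ) (i : Fin n) (x : Fin n → ℝ) : ℝ :=
  fderiv ℝ f x (Pi.single i 1)

/-- Jacobian matrix `(d_x f)^k_i = ∂x_i f^k` of a map `f : ℝ^n → ℝ^n`. -/
def Dmat {n : ℕ} (f : (Fin n → ℝ) → (Fin n → ℝ)) (x : Fin n → ℝ) :
    Matrix (Fin n) (Fin n) ℝ :=
  Matrix.of fun k i => pd (fun y => f y k) i x

/-- Cotangent lift `f̃(x,p) = (f(x), ᵗ((d_x f)^{−1}) p)` of a diffeomorphism. -/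
def cotLift {n : ℕ} (f : (Fin n → ℝ) → (Fin n → ℝ)) :
    (Fin n → ℝ) × (Fin n → ℝ) → (Fin n → ℝ) × (Fin n → ℝ) :=
  fun w => (f w.1, ((Dmat f w.1)⁻¹)ᵀ.mulVec w.2)

/-- Symmetrized Christoffel symbols `Γ̃^k_{ij} = (Γ^k_{ij} + Γ^k_{ji})/2`. -/
def symCh {n : ℕ} (Γ : (Fin n → ℝ) → Fin n → Fin n → Fin n → ℝ)
    (x : Fin n → ℝ) (k i j : Fin n) : ℝ :=
  (Γ x k i j + Γ x k j i) / 2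

/-- Components of `∇̃J`:
`(∇̃J)^k_{ij} = ∂x_i J^k_j − J^k_l Γ̃^l_{ij} + J^l_j Γ̃^k_{il}`. -/
def nablaTildeJ {n : ℕ} (J : (Fin n → ℝ) → Matrix (Fin n) (Fin n) ℝ)
    (Γ : (Fin n → ℝ) → Fin n → Fin n → Fin n → ℝ)
    (x : Fin n → ℝ) (k i j : Fin n) : ℝ :=
  pd (fun y => J y k j) i x - (∑ l, J x k l * symCh Γ x l i j)
    + ∑ l, J x l j * symCh Γ x k i l

/-- Components of `[∇̃J]`: `[∇̃J]^k_{ij} = −(∇̃J)^k_{ij} + (∇̃J)^k_{ji}`. -/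
def brNablaTildeJ {n : ℕ} (J : (Fin n → ℝ) → Matrix (Fin n) (Fin n) ℝ)
    (Γ : (Fin n → ℝ) → Fin n → Fin n → Fin n → ℝ)
    (x : Fin n → ℝ) (k i j : Fin n) : ℝ :=
  -nablaTildeJ J Γ x k i j + nablaTildeJ J Γ x k j i

/-- Lower-left block of the horizontal lift:
`C^i_j(x,p) = p_k (Γ̃^k_{il} J^l_j − Γ̃^k_{jl} J^l_i)`. -/
def Cblock {n : ℕ} (J : (Fin n → ℝ) → Matrix (Fin n) (Fin n) ℝ)
    (Γ : (Fin n → ℝ) → Fin n → Fin n → Fin n → ℝ) (x p : Fin n → ℝ) :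
    Matrix (Fin n) (Fin n) ℝ :=
  Matrix.of fun i j =>
    ∑ k, p k * ((∑ l, symCh Γ x k i l * J x l j) - ∑ l, symCh Γ x k j l * J x l i)

/-- The horizontal lift `J^{H,∇}(x,p)`, acting on tangent vectors `(X,P)` of
`T*ℝ^n = ℝ^n × ℝ^n` by `(X,P) ↦ (J X, C X + ᵗJ P)`. -/
def JHmap {n : ℕ} (J : (Fin n → ℝ) → Matrix (Fin n) (Fin n) ℝ)
    (Γ : (Fin n → ℝ) → Fin n → Fin n → Fin n → ℝ) (x p : Fin n → ℝ) :
    (Fin n → ℝ) × (Fin n → ℝ) → (Fin n → ℝ) × (Fin n → ℝ) :=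
  fun v => ((J x).mulVec v.1, (Cblock J Γ x p).mulVec v.1 + (J x)ᵀ.mulVec v.2)

namespace S14

lemma fderiv_comp_proj {n : ℕ} {f : (Fin n → ℝ) → (Fin n → ℝ)} {x : Fin n → ℝ}
    (hf : DifferentiableAt ℝ f x) (k : Fin n) (v : Fin n → ℝ) :
    fderiv ℝ (fun y => f y k) x v = fderiv ℝ f x v k := by
  have h0 := ((ContinuousLinearMap.proj (R := ℝ) (φ := fun _ : Fin n => ℝ) k).hasFDerivAt
      (x := f x)).comp x hf.hasFDerivAt
  have h : HasFDerivAt (fun y => f y k)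
      ((ContinuousLinearMap.proj k (R := ℝ) (φ := fun _ : Fin n => ℝ)).comp (fderiv ℝ f x)) x :=
    h0
  rw [h.fderiv]; rfl

lemma fderiv_eq_mulVec {n : ℕ} {f : (Fin n → ℝ) → (Fin n → ℝ)} {x : Fin n → ℝ}
    (hf : DifferentiableAt ℝ f x) (v : Fin n → ℝ) :
    fderiv ℝ f x v = (Dmat f x) *ᵥ v := by
  funext k
  have hv : v = ∑ i, v i • (Pi.single i (1:ℝ) : Fin n → ℝ) := by
    funext j
    simp [Finset.sum_apply, Pi.single_apply, Finset.sum_ite_eq']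
  rw [show fderiv ℝ f x v k = fderiv ℝ f x (∑ i, v i • (Pi.single i (1:ℝ) : Fin n → ℝ)) k by
    rw [← hv]]
  rw [map_sum]
  simp only [_root_.map_smul, Finset.sum_apply, Pi.smul_apply, smul_eq_mul]
  rw [mulVec]
  simp only [dotProduct, Dmat, Matrix.of_apply, pd]
  congr 1; funext i
  rw [← fderiv_comp_proj hf]
  ring

end S14

namespace S14

/-- Any continuous linear map on `Fin n → ℝ` is determined by its values on basis vectors. -/
lemma clm_apply_eq_sum {n : ℕ} (L : (Fin n → ℝ) →L[ℝ] ℝ) (v : Fin n → ℝ) :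
    L v = ∑ r, v r * L (Pi.single r 1) := by
  have hv : v = ∑ i, v i • (Pi.single i (1:ℝ) : Fin n → ℝ) := by
    funext j; simp [Finset.sum_apply, Pi.single_apply, Finset.sum_ite_eq']
  conv_lhs => rw [hv]
  rw [map_sum]
  simp [smul_eq_mul]

/-- `fderiv` applied to a vector, expanded in partial derivatives (no hypotheses needed). -/
lemma fderiv_apply_eq_sum {n : ℕ} (φ : (Fin n → ℝ) → ℝ) (x v : Fin n → ℝ) :
    fderiv ℝ φ x v = ∑ r, v r * pd φ r x :=
  clm_apply_eq_sum (fderiv ℝ φ x) v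

lemma pd_congr_nhds {n : ℕ} {φ ψ : (Fin n → ℝ) → ℝ} {x : Fin n → ℝ}
    (h : φ =ᶠ[nhds x] ψ) (i : Fin n) : pd φ i x = pd ψ i x := by
  unfold pd; rw [h.fderiv_eq]

lemma pd_mul {n : ℕ} {φ ψ : (Fin n → ℝ) → ℝ} {x : Fin n → ℝ}
    (hφ : DifferentiableAt ℝ φ x) (hψ : DifferentiableAt ℝ ψ x) (i : Fin n) :
    pd (fun y => φ y * ψ y) i x = pd φ i x * ψ x + φ x * pd ψ i x := by
  unfold pd; rw [fderiv_fun_mul hφ hψ]; simp [smul_eq_mul]; ring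

lemma pd_sum {n : ℕ} {ι : Type*} (s : Finset ι) {φ : ι → (Fin n → ℝ) → ℝ} {x : Fin n → ℝ}
    (hφ : ∀ a ∈ s, DifferentiableAt ℝ (φ a) x) (i : Fin n) :
    pd (fun y => ∑ a ∈ s, φ a y) i x = ∑ a ∈ s, pd (φ a) i x := by
  unfold pd
  rw [fderiv_fun_sum hφ]
  simp

/-- Chain rule for `pd`. -/
lemma pd_comp {n : ℕ} {h : (Fin n → ℝ) → ℝ} {f : (Fin n → ℝ) → (Fin n → ℝ)}
    {x : Fin n → ℝ} (hh : DifferentiableAt ℝ h (f x)) (hf : DifferentiableAt ℝ f x)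
    (j : Fin n) :
    pd (fun y => h (f y)) j x = ∑ b, pd h b (f x) * Dmat f x b j := by
  unfold pd
  rw [show (fun y => h (f y)) = h ∘ f from rfl, fderiv_comp x hh hf]
  simp only [ContinuousLinearMap.coe_comp', Function.comp_apply]
  rw [fderiv_eq_mulVec hf]
  rw [fderiv_apply_eq_sum]
  refine Finset.sum_congr rfl fun b _ => ?_
  have : (Dmat f x *ᵥ Pi.single j 1) b = Dmat f x b j := by
    simp [mulVec, dotProduct, Pi.single_apply, Finset.sum_ite_eq']
  rw [this, mul_comm]
  rfl

end S14

namespace S14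

lemma contDiffOn_pd {n : ℕ} {W : Set (Fin n → ℝ)} (hW : IsOpen W)
    {h : (Fin n → ℝ) → ℝ} (hh : ContDiffOn ℝ (⊤ : ℕ∞) h W) (i : Fin n) :
    ContDiffOn ℝ (⊤ : ℕ∞) (fun y => pd h i y) W := by
  have h1 : ContDiffOn ℝ (⊤ : ℕ∞) (fderiv ℝ h) W :=
    hh.fderiv_of_isOpen hW (by exact (by simp))
  exact h1.clm_apply contDiffOn_const

lemma differentiableAt_pd {n : ℕ} {W : Set (Fin n → ℝ)} (hW : IsOpen W)
    {h : (Fin n → ℝ) → ℝ} (hh : ContDiffOn ℝ (⊤ : ℕ∞) h W) (i : Fin n) {x : Fin n → ℝ}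
    (hx : x ∈ W) : DifferentiableAt ℝ (fun y => pd h i y) x :=
  ((contDiffOn_pd hW hh i).contDiffAt (hW.mem_nhds hx)).differentiableAt (by simp)

lemma differentiableAt_of_contDiffOn {n : ℕ} {W : Set (Fin n → ℝ)} (hW : IsOpen W)
    {h : (Fin n → ℝ) → ℝ} (hh : ContDiffOn ℝ (⊤ : ℕ∞) h W) {x : Fin n → ℝ}
    (hx : x ∈ W) : DifferentiableAt ℝ h x :=
  (hh.contDiffAt (hW.mem_nhds hx)).differentiableAt (by simp)

/-- Symmetry of second partial derivatives. -/
lemma pd_pd_symm {n : ℕ} {W : Set (Fin n → ℝ)} (hW : IsOpen W)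
    {h : (Fin n → ℝ) → ℝ} (hh : ContDiffOn ℝ (⊤ : ℕ∞) h W) {x : Fin n → ℝ} (hx : x ∈ W)
    (i m : Fin n) :
    pd (fun y => pd h i y) m x = pd (fun y => pd h m y) i x := by
  have hF : ContDiffOn ℝ (⊤ : ℕ∞) (fderiv ℝ h) W := hh.fderiv_of_isOpen hW (by exact (by simp))
  have hFd : DifferentiableAt ℝ (fderiv ℝ h) x :=
    (hF.contDiffAt (hW.mem_nhds hx)).differentiableAt (by simp)
  set f'' := fderiv ℝ (fderiv ℝ h) x with hf''
  have hev : ∀ᶠ y in nhds x, HasFDerivAt h (fderiv ℝ h y) y := by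
    filter_upwards [hW.mem_nhds hx] with y hy
    exact (differentiableAt_of_contDiffOn hW hh hy).hasFDerivAt
  have hsymm := second_derivative_symmetric_of_eventually hev hFd.hasFDerivAt
  have key : ∀ a b : Fin n,
      pd (fun y => pd h a y) b x = f'' (Pi.single b 1) (Pi.single a 1) := by
    intro a b
    have h1 : HasFDerivAt (fun y => (fderiv ℝ h y) (Pi.single a (1:ℝ)))
        ((f''.flip) (Pi.single a 1)) x := by
      have := hFd.hasFDerivAt.clm_apply (hasFDerivAt_const (Pi.single a (1:ℝ)) x)
      simpa using this
    unfold pd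
    rw [h1.fderiv]
    rfl
  rw [key i m, key m i, hsymm]

end S14

namespace S14

lemma Dmat_left_inv {n : ℕ} {U : Set (Fin n → ℝ)} (hU : IsOpen U)
    {f g : (Fin n → ℝ) → (Fin n → ℝ)} {x : Fin n → ℝ} (hx : x ∈ U)
    (hfd : DifferentiableAt ℝ f x) (hgd : DifferentiableAt ℝ g (f x))
    (hgf : ∀ y ∈ U, g (f y) = y) :
    Dmat g (f x) * Dmat f x = 1 := by
  have hcomp : fderiv ℝ (g ∘ f) x = (fderiv ℝ g (f x)).comp (fderiv ℝ f x) :=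
    fderiv_comp x hgd hfd
  have hev : (g ∘ f) =ᶠ[nhds x] id := by
    filter_upwards [hU.mem_nhds hx] with y hy
    exact hgf y hy
  have hid : fderiv ℝ (g ∘ f) x = ContinuousLinearMap.id ℝ (Fin n → ℝ) := by
    rw [hev.fderiv_eq, fderiv_id]
  have key : ∀ v, (Dmat g (f x) * Dmat f x) *ᵥ v = v := by
    intro v
    have h1 : fderiv ℝ (g ∘ f) x v = v := by rw [hid]; rfl
    rw [hcomp] at h1
    simp only [ContinuousLinearMap.coe_comp', Function.comp_apply] at h1
    rw [fderiv_eq_mulVec hfd, fderiv_eq_mulVec hgd, Matrix.mulVec_mulVec] at h1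
    exact h1
  ext k j
  have := congrFun (key (Pi.single j 1)) k
  rw [Matrix.mulVec_single] at this
  simp only [Pi.smul_apply, Matrix.col_apply, op_smul_eq_mul, mul_one] at this
  rw [this, Matrix.one_apply, Pi.single_apply]

end S14

namespace S14

variable {n : ℕ} {U V : Set (Fin n → ℝ)} {f g : (Fin n → ℝ) → (Fin n → ℝ)}

lemma diffAt_vec (hU : IsOpen U) (hf : ContDiffOn ℝ (⊤ : ℕ∞) f U) {x : Fin n → ℝ} (hx : x ∈ U) :
    DifferentiableAt ℝ f x :=
  (hf.contDiffAt (hU.mem_nhds hx)).differentiableAt (by simp)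

/-- Differentiability of entries of `y ↦ Dmat g (f y)` at points of `U`. -/
lemma diffAt_Gent (hU : IsOpen U) (hV : IsOpen V) (hf : ContDiffOn ℝ (⊤ : ℕ∞) f U)
    (hg : ContDiffOn ℝ (⊤ : ℕ∞) g V) (hfU : Set.MapsTo f U V) {x : Fin n → ℝ} (hx : x ∈ U)
    (j i : Fin n) : DifferentiableAt ℝ (fun y => Dmat g (f y) j i) x := by
  have hcomp : ContDiffOn ℝ (⊤ : ℕ∞) (fun w => g w j) V :=
    (ContinuousLinearMap.proj (R := ℝ) (φ := fun _ : Fin n => ℝ) j).contDiff.comp_contDiffOn hg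
  have h1 : DifferentiableAt ℝ (fun z => pd (fun w => g w j) i z) (f x) :=
    differentiableAt_pd hV hcomp i (hfU hx)
  exact h1.comp x (diffAt_vec hU hf hx)

end S14

namespace S14

variable {n : ℕ} {U V : Set (Fin n → ℝ)} {f g : (Fin n → ℝ) → (Fin n → ℝ)}

lemma fderiv_cotLift (hU : IsOpen U) (hV : IsOpen V) (hf : ContDiffOn ℝ (⊤ : ℕ∞) f U)
    (hg : ContDiffOn ℝ (⊤ : ℕ∞) g V) (hfU : Set.MapsTo f U V) (hgV : Set.MapsTo g V U)
    (hgf : ∀ y ∈ U, g (f y) = y) (hfg : ∀ z ∈ V, f (g z) = z)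
    {x : Fin n → ℝ} (hx : x ∈ U) (p : Fin n → ℝ) (v : (Fin n → ℝ) × (Fin n → ℝ)) :
    fderiv ℝ (cotLift f) (x, p) v =
      ((Dmat f x) *ᵥ v.1,
        fun i => (∑ j, (∑ r, pd (fun y => Dmat g (f y) j i) r x * v.1 r) * p j)
          + ∑ j, Dmat g (f x) j i * v.2 j) := by
  classical
  have hfdy : ∀ y ∈ U, DifferentiableAt ℝ f y := fun y hy => diffAt_vec hU hf hy
  have hgdy : ∀ z ∈ V, DifferentiableAt ℝ g z := fun z hz => diffAt_vec hV hg hz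
  -- right inverse of the Jacobian on U
  have hright : ∀ y ∈ U, Dmat f y * Dmat g (f y) = 1 := by
    intro y hy
    have := Dmat_left_inv hV (hfU hy) (hgdy _ (hfU hy))
      (by rw [hgf y hy]; exact hfdy y hy) hfg
    rwa [hgf y hy] at this
  set Φ : (Fin n → ℝ) × (Fin n → ℝ) → (Fin n → ℝ) × (Fin n → ℝ) :=
    fun w => (f w.1, fun i => ∑ j, Dmat g (f w.1) j i * w.2 j) with hΦ
  have heq : cotLift f =ᶠ[nhds (x, p)] Φ := by
    filter_upwards [(hU.prod isOpen_univ).mem_nhds ⟨hx, trivial⟩] with w hw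
    have hw1 : w.1 ∈ U := hw.1
    have hinv : (Dmat f w.1)⁻¹ = Dmat g (f w.1) :=
      Matrix.inv_eq_right_inv (hright _ hw1)
    show (f w.1, ((Dmat f w.1)⁻¹)ᵀ *ᵥ w.2) = _
    rw [hinv, hΦ]
    refine Prod.ext rfl ?_
    funext i
    simp [mulVec, dotProduct, Matrix.transpose_apply]
  rw [heq.fderiv_eq]
  -- derivative of Φ
  have h1 : HasFDerivAt (fun w : (Fin n → ℝ) × (Fin n → ℝ) => f w.1)
      ((fderiv ℝ f x).comp (ContinuousLinearMap.fst ℝ (Fin n → ℝ) (Fin n → ℝ))) (x, p) :=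
    (hfdy x hx).hasFDerivAt.comp (x, p) hasFDerivAt_fst
  set Dterm : Fin n → Fin n → ((Fin n → ℝ) × (Fin n → ℝ)) →L[ℝ] ℝ := fun i j =>
    Dmat g (f x) j i •
        ((ContinuousLinearMap.proj j).comp (ContinuousLinearMap.snd ℝ (Fin n → ℝ) (Fin n → ℝ)))
      + p j • ((fderiv ℝ (fun y => Dmat g (f y) j i) x).comp
          (ContinuousLinearMap.fst ℝ (Fin n → ℝ) (Fin n → ℝ))) with hDterm
  have h2 : ∀ i, HasFDerivAt
      (fun w : (Fin n → ℝ) × (Fin n → ℝ) => ∑ j, Dmat g (f w.1) j i * w.2 j)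
      (∑ j, Dterm i j) (x, p) := by
    intro i
    refine HasFDerivAt.fun_sum fun j _ => ?_
    have hc : HasFDerivAt (fun w : (Fin n → ℝ) × (Fin n → ℝ) => Dmat g (f w.1) j i)
        ((fderiv ℝ (fun y => Dmat g (f y) j i) x).comp
          (ContinuousLinearMap.fst ℝ (Fin n → ℝ) (Fin n → ℝ))) (x, p) :=
      by
        have h := (diffAt_Gent hU hV hf hg hfU hx j i).hasFDerivAt.comp (x, p)
          (hasFDerivAt_fst : HasFDerivAt (Prod.fst : (Fin n → ℝ) × (Fin n → ℝ) → Fin n → ℝ)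
            (ContinuousLinearMap.fst ℝ (Fin n → ℝ) (Fin n → ℝ)) (x, p))
        exact h
    have hd : HasFDerivAt (fun w : (Fin n → ℝ) × (Fin n → ℝ) => w.2 j)
        ((ContinuousLinearMap.proj j).comp
          (ContinuousLinearMap.snd ℝ (Fin n → ℝ) (Fin n → ℝ))) (x, p) :=
      ((ContinuousLinearMap.proj (R := ℝ) (φ := fun _ : Fin n => ℝ) j).hasFDerivAt).comp
        (x, p) hasFDerivAt_snd
    exact hc.mul hd
  have hΦ' : HasFDerivAt Φ
      (((fderiv ℝ f x).comp (ContinuousLinearMap.fst ℝ (Fin n → ℝ) (Fin n → ℝ))).prod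
        (ContinuousLinearMap.pi fun i => ∑ j, Dterm i j)) (x, p) :=
    h1.prodMk (hasFDerivAt_pi.mpr h2)
  rw [hΦ'.fderiv]
  refine Prod.ext ?_ ?_
  · show fderiv ℝ f x v.1 = Dmat f x *ᵥ v.1
    exact fderiv_eq_mulVec (hfdy x hx) v.1
  · funext i
    show (∑ j, Dterm i j) v = _
    rw [ContinuousLinearMap.sum_apply]
    simp only [hDterm, ContinuousLinearMap.add_apply, ContinuousLinearMap.smul_apply,
      ContinuousLinearMap.coe_comp', Function.comp_apply, ContinuousLinearMap.coe_fst',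
      ContinuousLinearMap.coe_snd', ContinuousLinearMap.proj_apply, smul_eq_mul]
    rw [Finset.sum_add_distrib, add_comm]
    congr 1
    refine Finset.sum_congr rfl fun j _ => ?_
    rw [fderiv_apply_eq_sum]
    rw [Finset.mul_sum, Finset.sum_mul]
    exact Finset.sum_congr rfl fun r _ => by ring

end S14

namespace S14

variable {n : ℕ} {U V : Set (Fin n → ℝ)} {f g : (Fin n → ℝ) → (Fin n → ℝ)}

lemma contDiffOn_comp_proj (hf : ContDiffOn ℝ (⊤ : ℕ∞) f U) (k : Fin n) :
    ContDiffOn ℝ (⊤ : ℕ∞) (fun y => f y k) U :=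
  (ContinuousLinearMap.proj (R := ℝ) (φ := fun _ : Fin n => ℝ) k).contDiff.comp_contDiffOn hf

lemma diffAt_Aent (hU : IsOpen U) (hf : ContDiffOn ℝ (⊤ : ℕ∞) f U) {x : Fin n → ℝ} (hx : x ∈ U)
    (a b : Fin n) : DifferentiableAt ℝ (fun y => Dmat f y a b) x :=
  differentiableAt_pd hU (contDiffOn_comp_proj hf a) b hx

/-- Symmetry of the second-derivative tensor of `f`. -/
lemma S_symm (hU : IsOpen U) (hf : ContDiffOn ℝ (⊤ : ℕ∞) f U) {x : Fin n → ℝ} (hx : x ∈ U)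
    (a b r : Fin n) :
    pd (fun y => Dmat f y a b) r x = pd (fun y => Dmat f y a r) b x :=
  pd_pd_symm hU (contDiffOn_comp_proj hf a) hx b r

/-- Derivative of the entries of the inverse Jacobian. -/
lemma pd_Gent (hU : IsOpen U) (hV : IsOpen V) (hf : ContDiffOn ℝ (⊤ : ℕ∞) f U)
    (hg : ContDiffOn ℝ (⊤ : ℕ∞) g V) (hfU : Set.MapsTo f U V)
    (hgf : ∀ y ∈ U, g (f y) = y) (hfg : ∀ z ∈ V, f (g z) = z)
    {x : Fin n → ℝ} (hx : x ∈ U) (r j i : Fin n) :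
    pd (fun y => Dmat g (f y) j i) r x =
      -∑ l, ∑ m, Dmat g (f x) j m * pd (fun y => Dmat f y m l) r x * Dmat g (f x) l i := by
  classical
  have hleft : ∀ y ∈ U, Dmat g (f y) * Dmat f y = 1 := fun y hy =>
    Dmat_left_inv hU hy (diffAt_vec hU hf hy) (diffAt_vec hV hg (hfU hy)) hgf
  have hright : Dmat f x * Dmat g (f x) = 1 := by
    have := Dmat_left_inv hV (hfU hx) (diffAt_vec hV hg (hfU hx))
      (by rw [hgf x hx]; exact diffAt_vec hU hf hx) hfg
    rwa [hgf x hx] at this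
  -- differentiate the identity ∑ₘ G(y) k m A(y) m l = δ k l
  have key : ∀ k l : Fin n,
      ∑ m, (pd (fun y => Dmat g (f y) k m) r x * Dmat f x m l
        + Dmat g (f x) k m * pd (fun y => Dmat f y m l) r x) = 0 := by
    intro k l
    have hdiff : ∀ m : Fin n, DifferentiableAt ℝ
        (fun y => Dmat g (f y) k m * Dmat f y m l) x := fun m =>
      (diffAt_Gent hU hV hf hg hfU hx k m).mul (diffAt_Aent hU hf hx m l)
    have hconst : (fun y => ∑ m, Dmat g (f y) k m * Dmat f y m l) =ᶠ[nhds x]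
        (fun _ => (1 : Matrix (Fin n) (Fin n) ℝ) k l) := by
      filter_upwards [hU.mem_nhds hx] with y hy
      have := congrFun (congrFun (hleft y hy) k) l
      simpa [Matrix.mul_apply] using this
    have h0 : pd (fun y => ∑ m, Dmat g (f y) k m * Dmat f y m l) r x = 0 := by
      rw [pd_congr_nhds hconst]
      unfold pd
      simp
    rw [pd_sum Finset.univ (fun m _ => hdiff m)] at h0
    rw [← h0]
    exact Finset.sum_congr rfl fun m _ =>
      (pd_mul (diffAt_Gent hU hV hf hg hfU hx k m) (diffAt_Aent hU hf hx m l) r).symm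
  -- solve for pdG
  have step : ∀ l : Fin n, ∑ m, pd (fun y => Dmat g (f y) j m) r x * Dmat f x m l
      = -∑ m, Dmat g (f x) j m * pd (fun y => Dmat f y m l) r x := by
    intro l
    have := key j l
    rw [Finset.sum_add_distrib] at this
    linarith
  calc pd (fun y => Dmat g (f y) j i) r x
      = ∑ l, (∑ m, pd (fun y => Dmat g (f y) j m) r x * Dmat f x m l) * Dmat g (f x) l i := by
        symm
        calc ∑ l, (∑ m, pd (fun y => Dmat g (f y) j m) r x * Dmat f x m l) * Dmat g (f x) l i
            = ∑ l, ∑ m, pd (fun y => Dmat g (f y) j m) r x * (Dmat f x m l * Dmat g (f x) l i) := by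
              simp [Finset.sum_mul, mul_assoc]
          _ = ∑ m, pd (fun y => Dmat g (f y) j m) r x * ∑ l, Dmat f x m l * Dmat g (f x) l i := by
              rw [Finset.sum_comm]
              simp [Finset.mul_sum]
          _ = ∑ m, pd (fun y => Dmat g (f y) j m) r x * (1 : Matrix (Fin n) (Fin n) ℝ) m i := by
              refine Finset.sum_congr rfl fun m _ => ?_
              rw [← Matrix.mul_apply, hright]
          _ = pd (fun y => Dmat g (f y) j i) r x := by
              simp [Matrix.one_apply, Finset.sum_ite_eq']
    _ = ∑ l, (-∑ m, Dmat g (f x) j m * pd (fun y => Dmat f y m l) r x) * Dmat g (f x) l i := by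
        exact Finset.sum_congr rfl fun l _ => by rw [step l]
    _ = -∑ l, ∑ m, Dmat g (f x) j m * pd (fun y => Dmat f y m l) r x * Dmat g (f x) l i := by
        rw [← Finset.sum_neg_distrib]
        exact Finset.sum_congr rfl fun l _ => by rw [neg_mul, Finset.sum_mul]

end S14

namespace S14

variable {n : ℕ} {U V : Set (Fin n → ℝ)} {f g : (Fin n → ℝ) → (Fin n → ℝ)}

/-- Differentiating the holomorphy identity `(Dmat f) J₁ = (J₂ ∘ f) (Dmat f)` on `U`. -/
lemma CH (hU : IsOpen U) (hV : IsOpen V) (hf : ContDiffOn ℝ (⊤ : ℕ∞) f U)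
    (hfU : Set.MapsTo f U V)
    {J₁ J₂ : (Fin n → ℝ) → Matrix (Fin n) (Fin n) ℝ}
    (hJ1 : ∀ k j : Fin n, ContDiffOn ℝ (⊤ : ℕ∞) (fun y => J₁ y k j) U)
    (hJ2 : ∀ k j : Fin n, ContDiffOn ℝ (⊤ : ℕ∞) (fun z => J₂ z k j) V)
    (hi : ∀ y ∈ U, Dmat f y * J₁ y = J₂ (f y) * Dmat f y)
    {x : Fin n → ℝ} (hx : x ∈ U) (k i r : Fin n) :
    ∑ m, (pd (fun y => Dmat f y k m) r x * J₁ x m i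
        + Dmat f x k m * pd (fun y => J₁ y m i) r x)
      = ∑ m, ((∑ b, pd (fun z => J₂ z k m) b (f x) * Dmat f x b r) * Dmat f x m i
        + J₂ (f x) k m * pd (fun y => Dmat f y m i) r x) := by
  classical
  have hJ1d : ∀ a b : Fin n, DifferentiableAt ℝ (fun y => J₁ y a b) x := fun a b =>
    differentiableAt_of_contDiffOn hU (hJ1 a b) hx
  have hJ2fd : ∀ a b : Fin n, DifferentiableAt ℝ (fun y => J₂ (f y) a b) x := fun a b =>
    (differentiableAt_of_contDiffOn hV (hJ2 a b) (hfU hx)).comp x (diffAt_vec hU hf hx)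
  have hev : (fun y => ∑ m, Dmat f y k m * J₁ y m i) =ᶠ[nhds x]
      (fun y => ∑ m, J₂ (f y) k m * Dmat f y m i) := by
    filter_upwards [hU.mem_nhds hx] with y hy
    have := congrFun (congrFun (hi y hy) k) i
    simpa [Matrix.mul_apply] using this
  have h1 : pd (fun y => ∑ m, Dmat f y k m * J₁ y m i) r x
      = pd (fun y => ∑ m, J₂ (f y) k m * Dmat f y m i) r x := pd_congr_nhds hev r
  rw [pd_sum (φ := fun m y => Dmat f y k m * J₁ y m i) Finset.univ (fun m _ => ((diffAt_Aent hU hf hx k m).mul (hJ1d m i) :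
        DifferentiableAt ℝ (fun y => Dmat f y k m * J₁ y m i) x)),
      pd_sum (φ := fun m y => J₂ (f y) k m * Dmat f y m i) Finset.univ (fun m _ => ((hJ2fd k m).mul (diffAt_Aent hU hf hx m i) :
        DifferentiableAt ℝ (fun y => J₂ (f y) k m * Dmat f y m i) x))] at h1
  calc ∑ m, (pd (fun y => Dmat f y k m) r x * J₁ x m i
        + Dmat f x k m * pd (fun y => J₁ y m i) r x)
      = ∑ m, pd (fun y => Dmat f y k m * J₁ y m i) r x :=
        Finset.sum_congr rfl fun m _ =>
          (pd_mul (diffAt_Aent hU hf hx k m) (hJ1d m i) r).symm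
    _ = ∑ m, pd (fun y => J₂ (f y) k m * Dmat f y m i) r x := h1
    _ = ∑ m, ((∑ b, pd (fun z => J₂ z k m) b (f x) * Dmat f x b r) * Dmat f x m i
        + J₂ (f x) k m * pd (fun y => Dmat f y m i) r x) := by
        refine Finset.sum_congr rfl fun m _ => ?_
        rw [pd_mul (hJ2fd k m) (diffAt_Aent hU hf hx m i) r]
        rw [pd_comp (differentiableAt_of_contDiffOn hV (hJ2 k m) (hfU hx))
          (diffAt_vec hU hf hx) r]

end S14

namespace S14a
open Finset

variable {n : ℕ}

section Perm
variable {f : Fin n → Fin n → Fin n → ℝ} {h : Fin n → Fin n → Fin n → Fin n → ℝ}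

lemma sum3_12 : ∑ a, ∑ b, ∑ c, f a b c = ∑ b, ∑ a, ∑ c, f a b c := Finset.sum_comm

lemma sum3_23 : ∑ a, ∑ b, ∑ c, f a b c = ∑ a, ∑ c, ∑ b, f a b c :=
  Finset.sum_congr rfl fun _ _ => Finset.sum_comm

lemma sum4_12 : ∑ a, ∑ b, ∑ c, ∑ d, h a b c d = ∑ b, ∑ a, ∑ c, ∑ d, h a b c d :=
  Finset.sum_comm

lemma sum4_23 : ∑ a, ∑ b, ∑ c, ∑ d, h a b c d = ∑ a, ∑ c, ∑ b, ∑ d, h a b c d :=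
  Finset.sum_congr rfl fun _ _ => Finset.sum_comm

lemma sum4_34 : ∑ a, ∑ b, ∑ c, ∑ d, h a b c d = ∑ a, ∑ b, ∑ d, ∑ c, h a b c d :=
  Finset.sum_congr rfl fun _ _ => Finset.sum_congr rfl fun _ _ => Finset.sum_comm

end Perm

/-- delta collapse: `∑ μ, (A * G) c μ * E μ = E c` when `A * G = 1`. -/
lemma delta_sum {A G : Matrix (Fin n) (Fin n) ℝ} (h : A * G = 1) (c : Fin n)
    (E : Fin n → ℝ) : ∑ μ, (∑ a, A c a * G a μ) * E μ = E c := by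
  have h1 : ∀ μ, (∑ a, A c a * G a μ) = if c = μ then (1:ℝ) else 0 := fun μ => by
    rw [← Matrix.mul_apply, h, Matrix.one_apply]
  simp [h1]

/-- delta collapse over the first index. -/
lemma delta_sum' {A G : Matrix (Fin n) (Fin n) ℝ} (h : A * G = 1) (i : Fin n)
    (E : Fin n → ℝ) : ∑ μ, (∑ a, A μ a * G a i) * E μ = E i := by
  have h1 : ∀ μ, (∑ a, A μ a * G a i) = if μ = i then (1:ℝ) else 0 := fun μ => by
    rw [← Matrix.mul_apply, h, Matrix.one_apply]
  simp [h1]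

section Defs
variable (A G J1 J2 : Matrix (Fin n) (Fin n) ℝ)
variable (S DG Γt1 Γt2 : Fin n → Fin n → Fin n → ℝ)

def T1 (i c m : Fin n) : ℝ := ∑ a, (∑ r, DG r a i * J1 r m) * A c a
def T2 (i c m : Fin n) : ℝ :=
  ∑ a, G a i * (∑ k, A c k * ((∑ l, Γt1 k a l * J1 l m) - (∑ l, Γt1 k m l * J1 l a)))
def T3 (i c m : Fin n) : ℝ :=
  ∑ b, ((∑ l, Γt2 c i l * J2 l b) - (∑ l, Γt2 c b l * J2 l i)) * A b m
def T4 (i c m : Fin n) : ℝ := ∑ a, J2 a i * (∑ j, DG m j a * A c j)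

def starG1 (c w m : Fin n) : ℝ :=
  ∑ k, A c k * ((∑ l, Γt1 k w l * J1 l m) - (∑ l, Γt1 k m l * J1 l w))
def starG2 (c w m : Fin n) : ℝ :=
  ∑ a, ∑ b, A a w * A b m * ((∑ l, Γt2 c a l * J2 l b) - (∑ l, Γt2 c b l * J2 l a))
def starL (c w m : Fin n) : ℝ := (-∑ r, S c w r * J1 r m) + starG1 A J1 Γt1 c w m
def starR (c w m : Fin n) : ℝ := starG2 A J2 Γt2 c w m + (-∑ t, S c t m * J1 t w)

end Defs

section L2
variable {A G J1 J2 : Matrix (Fin n) (Fin n) ℝ}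
variable {S DG Γt1 Γt2 : Fin n → Fin n → Fin n → ℝ}
variable (hAG : A * G = 1) (hGA : G * A = 1)
variable (hDG : ∀ r j i, DG r j i = -∑ l, ∑ μ, G j μ * S μ l r * G l i)
variable (hJ1G : J1 * G = G * J2)

include hAG hDG in
lemma T1_eq (i c m : Fin n) :
    T1 A J1 DG i c m = ∑ w, G w i * (-∑ r, S c w r * J1 r m) := by
  calc T1 A J1 DG i c m
      = ∑ a, ∑ r, (-∑ l, ∑ μ, G a μ * S μ l r * G l i) * J1 r m * A c a := by
        unfold T1
        refine Finset.sum_congr rfl fun a _ => ?_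
        rw [Finset.sum_mul]
        exact Finset.sum_congr rfl fun r _ => by rw [hDG]
    _ = ∑ a, ∑ r, ∑ l, ∑ μ, -(A c a * G a μ * (S μ l r * G l i * J1 r m)) := by
        refine Finset.sum_congr rfl fun a _ => Finset.sum_congr rfl fun r _ => ?_
        rw [neg_mul, neg_mul, Finset.sum_mul, Finset.sum_mul, ← Finset.sum_neg_distrib]
        refine Finset.sum_congr rfl fun l _ => ?_
        rw [Finset.sum_mul, Finset.sum_mul, ← Finset.sum_neg_distrib]
        exact Finset.sum_congr rfl fun μ _ => by ring
    _ = ∑ l, ∑ r, ∑ μ, ∑ a, -(A c a * G a μ * (S μ l r * G l i * J1 r m)) := by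
        rw [sum4_12, sum4_23, sum4_12, sum4_34]
    _ = -∑ l, ∑ r, ∑ μ, (∑ a, A c a * G a μ) * (S μ l r * G l i * J1 r m) := by
        rw [← Finset.sum_neg_distrib]
        refine Finset.sum_congr rfl fun l _ => ?_
        rw [← Finset.sum_neg_distrib]
        refine Finset.sum_congr rfl fun r _ => ?_
        rw [← Finset.sum_neg_distrib]
        refine Finset.sum_congr rfl fun μ _ => ?_
        rw [Finset.sum_mul, ← Finset.sum_neg_distrib]
    _ = -∑ l, ∑ r, S c l r * G l i * J1 r m := by
        congr 1
        refine Finset.sum_congr rfl fun l _ => ?_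
        refine Finset.sum_congr rfl fun r _ => ?_
        exact delta_sum hAG c (fun μ => S μ l r * G l i * J1 r m)
    _ = ∑ w, G w i * (-∑ r, S c w r * J1 r m) := by
        rw [← Finset.sum_neg_distrib]
        refine Finset.sum_congr rfl fun l _ => ?_
        rw [mul_neg, Finset.mul_sum]
        rw [← Finset.sum_neg_distrib, ← Finset.sum_neg_distrib]
        exact Finset.sum_congr rfl fun r _ => by ring

include hAG in
lemma T3_eq (i c m : Fin n) :
    T3 A J2 Γt2 i c m = ∑ w, G w i * starG2 A J2 Γt2 c w m := by
  symm
  calc ∑ w, G w i * starG2 A J2 Γt2 c w m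
      = ∑ w, ∑ a, ∑ b, G w i * (A a w * A b m *
          ((∑ l, Γt2 c a l * J2 l b) - (∑ l, Γt2 c b l * J2 l a))) := by
        refine Finset.sum_congr rfl fun w _ => ?_
        rw [starG2, Finset.mul_sum]
        exact Finset.sum_congr rfl fun a _ => by rw [Finset.mul_sum]
    _ = ∑ a, ∑ b, ∑ w, G w i * (A a w * A b m *
          ((∑ l, Γt2 c a l * J2 l b) - (∑ l, Γt2 c b l * J2 l a))) := by
        rw [sum3_12, sum3_23]
    _ = ∑ a, (∑ w, A a w * G w i) * (∑ b, A b m *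
          ((∑ l, Γt2 c a l * J2 l b) - (∑ l, Γt2 c b l * J2 l a))) := by
        refine Finset.sum_congr rfl fun a _ => ?_
        rw [Finset.sum_comm, Finset.sum_mul]
        refine Finset.sum_congr rfl fun w _ => ?_
        rw [Finset.mul_sum]
        exact Finset.sum_congr rfl fun b _ => by ring
    _ = ∑ b, A b m * ((∑ l, Γt2 c i l * J2 l b) - (∑ l, Γt2 c b l * J2 l i)) :=
        delta_sum' hAG i _
    _ = T3 A J2 Γt2 i c m := by
        unfold T3
        exact Finset.sum_congr rfl fun b _ => by ring

include hAG hDG hJ1G in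
lemma T4_eq (i c m : Fin n) :
    T4 A J2 DG i c m = ∑ w, G w i * (-∑ t, S c t m * J1 t w) := by
  have hGJ : ∀ t w : Fin n, (∑ a, J1 t a * G a w) = ∑ a, G t a * J2 a w := by
    intro t w
    have h1 := congrFun (congrFun hJ1G t) w
    simpa [Matrix.mul_apply] using h1
  calc T4 A J2 DG i c m
      = ∑ a, J2 a i * (-∑ l, S c l m * G l a) := by
        unfold T4
        refine Finset.sum_congr rfl fun a _ => ?_
        congr 1
        calc ∑ j, DG m j a * A c j
            = ∑ j, ∑ l, ∑ μ, -(A c j * G j μ * (S μ l m * G l a)) := by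
              refine Finset.sum_congr rfl fun j _ => ?_
              rw [hDG, neg_mul, Finset.sum_mul, ← Finset.sum_neg_distrib]
              refine Finset.sum_congr rfl fun l _ => ?_
              rw [Finset.sum_mul, ← Finset.sum_neg_distrib]
              exact Finset.sum_congr rfl fun μ _ => by ring
          _ = ∑ l, ∑ μ, ∑ j, -(A c j * G j μ * (S μ l m * G l a)) := by
              rw [sum3_12, sum3_23]
          _ = -∑ l, ∑ μ, (∑ j, A c j * G j μ) * (S μ l m * G l a) := by
              rw [← Finset.sum_neg_distrib]
              refine Finset.sum_congr rfl fun l _ => ?_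
              rw [← Finset.sum_neg_distrib]
              refine Finset.sum_congr rfl fun μ _ => ?_
              rw [Finset.sum_mul, ← Finset.sum_neg_distrib]
          _ = -∑ l, S c l m * G l a := by
              congr 1
              exact Finset.sum_congr rfl fun l _ => delta_sum hAG c _
    _ = ∑ a, ∑ l, -(S c l m * G l a * J2 a i) := by
        refine Finset.sum_congr rfl fun a _ => ?_
        rw [mul_neg, Finset.mul_sum, ← Finset.sum_neg_distrib]
        exact Finset.sum_congr rfl fun l _ => by ring
    _ = ∑ l, ∑ a, -(S c l m * G l a * J2 a i) := Finset.sum_comm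
    _ = -∑ l, S c l m * (∑ a, G l a * J2 a i) := by
        rw [← Finset.sum_neg_distrib]
        refine Finset.sum_congr rfl fun l _ => ?_
        rw [Finset.sum_neg_distrib, Finset.mul_sum, neg_inj]
        exact Finset.sum_congr rfl fun a _ => by ring
    _ = -∑ l, S c l m * (∑ a, J1 l a * G a i) := by
        refine congrArg Neg.neg (Finset.sum_congr rfl fun l _ => ?_)
        rw [hGJ l i]
    _ = ∑ w, G w i * (-∑ t, S c t m * J1 t w) := by
        symm
        calc ∑ w, G w i * (-∑ t, S c t m * J1 t w)
            = ∑ w, ∑ t, -(S c t m * (J1 t w * G w i)) := by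
              refine Finset.sum_congr rfl fun w _ => ?_
              rw [mul_neg, Finset.mul_sum, ← Finset.sum_neg_distrib]
              exact Finset.sum_congr rfl fun t _ => by ring
          _ = ∑ t, ∑ w, -(S c t m * (J1 t w * G w i)) := Finset.sum_comm
          _ = -∑ t, S c t m * (∑ w, J1 t w * G w i) := by
              rw [← Finset.sum_neg_distrib]
              refine Finset.sum_congr rfl fun t _ => ?_
              rw [Finset.sum_neg_distrib, Finset.mul_sum, neg_inj]

lemma T2_eq (i c m : Fin n) :
    T2 A G J1 Γt1 i c m = ∑ w, G w i * starG1 A J1 Γt1 c w m := rfl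

include hGA in
lemma coll_GA (E : Fin n → ℝ) (w : Fin n) :
    ∑ i, A i w * ∑ w', G w' i * E w' = E w := by
  calc ∑ i, A i w * ∑ w', G w' i * E w'
      = ∑ i, ∑ w', A i w * (G w' i * E w') := by
        exact Finset.sum_congr rfl fun i _ => by rw [Finset.mul_sum]
    _ = ∑ w', (∑ i, G w' i * A i w) * E w' := by
        rw [Finset.sum_comm]
        refine Finset.sum_congr rfl fun w' _ => ?_
        rw [Finset.sum_mul]
        exact Finset.sum_congr rfl fun i _ => by ring
    _ = E w := delta_sum' hGA w E

include hAG hGA hDG hJ1G in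
lemma dagger_iff_star :
    (∀ i c m, T1 A J1 DG i c m + T2 A G J1 Γt1 i c m
        = T3 A J2 Γt2 i c m + T4 A J2 DG i c m) ↔
      (∀ c w m, starL A J1 S Γt1 c w m = starR A J1 J2 S Γt2 c w m) := by
  have key : ∀ i c m,
      (T1 A J1 DG i c m + T2 A G J1 Γt1 i c m = ∑ w, G w i * starL A J1 S Γt1 c w m)
      ∧ (T3 A J2 Γt2 i c m + T4 A J2 DG i c m
          = ∑ w, G w i * starR A J1 J2 S Γt2 c w m) := by
    intro i c m
    constructor
    · rw [T1_eq hAG hDG, T2_eq]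
      rw [← Finset.sum_add_distrib]
      exact Finset.sum_congr rfl fun w _ => by rw [starL, mul_add]
    · rw [T3_eq hAG, T4_eq hAG hDG hJ1G]
      rw [← Finset.sum_add_distrib]
      refine Finset.sum_congr rfl fun w _ => ?_
      rw [starR, mul_add]
  constructor
  · intro H c w m
    have h2 : ∀ i, ∑ w', G w' i * starL A J1 S Γt1 c w' m
        = ∑ w', G w' i * starR A J1 J2 S Γt2 c w' m := by
      intro i
      rw [← (key i c m).1, ← (key i c m).2]
      exact H i c m
    calc starL A J1 S Γt1 c w m
        = ∑ i, A i w * ∑ w', G w' i * starL A J1 S Γt1 c w' m :=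
          (coll_GA hGA (fun w' => starL A J1 S Γt1 c w' m) w).symm
      _ = ∑ i, A i w * ∑ w', G w' i * starR A J1 J2 S Γt2 c w' m :=
          Finset.sum_congr rfl fun i _ => by rw [h2 i]
      _ = starR A J1 J2 S Γt2 c w m :=
          coll_GA hGA (fun w' => starR A J1 J2 S Γt2 c w' m) w
  · intro H i c m
    rw [(key i c m).1, (key i c m).2]
    exact Finset.sum_congr rfl fun w _ => by rw [H c w m]

end L2

section L3
variable {A G J1 J2 : Matrix (Fin n) (Fin n) ℝ}
variable {S DG Γt1 Γt2 DJ1 DJ2 : Fin n → Fin n → Fin n → ℝ}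

/-- abstract form of `brNablaTildeJ`. -/
def br (J : Matrix (Fin n) (Fin n) ℝ) (DJ Γt : Fin n → Fin n → Fin n → ℝ)
    (k i j : Fin n) : ℝ :=
  -(DJ k j i - (∑ l, J k l * Γt l i j) + ∑ l, J l j * Γt k i l)
    + (DJ k i j - (∑ l, J k l * Γt l j i) + ∑ l, J l i * Γt k j l)

variable (hS : ∀ a b r, S a b r = S a r b)
variable (hΓ1 : ∀ k i j, Γt1 k i j = Γt1 k j i)
variable (hΓ2 : ∀ k i j, Γt2 k i j = Γt2 k j i)
variable (hCH : ∀ k i r, ∑ m, (S k m r * J1 m i + A k m * DJ1 m i r)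
  = ∑ m, ((∑ b, DJ2 k m b * A b r) * A m i + J2 k m * S m i r))

include hS hΓ1 hΓ2 hCH in
lemma star_iff_B :
    (∀ c w m, starL A J1 S Γt1 c w m = starR A J1 J2 S Γt2 c w m) ↔
      (∀ k i j, ∑ m, A k m * br J1 DJ1 Γt1 m i j
        = ∑ m, ∑ l, br J2 DJ2 Γt2 k m l * A m i * A l j) := by
  have main : ∀ k i j,
      (starL A J1 S Γt1 k i j = starR A J1 J2 S Γt2 k i j) ↔
      (∑ m, A k m * br J1 DJ1 Γt1 m i j
        = ∑ m, ∑ l, br J2 DJ2 Γt2 k m l * A m i * A l j) := by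
    intro k i j
    set a1 := ∑ m, A k m * DJ1 m i j with ha1
    set a2 := ∑ m, A k m * DJ1 m j i with ha2
    set g1 := starG1 A J1 Γt1 k i j with hg1
    set g2 := starG2 A J2 Γt2 k i j with hg2
    set d1 := ∑ m, ∑ l, DJ2 k m l * A m i * A l j with hd1
    set d2 := ∑ m, ∑ l, DJ2 k l m * A m i * A l j with hd2
    set s1 := ∑ m, S k m j * J1 m i with hs1
    set s2 := ∑ m, S k m i * J1 m j with hs2
    set u1 := ∑ m, J2 k m * S m i j with hu1
    -- E1 in atoms
    have hE1 : ∑ m, A k m * br J1 DJ1 Γt1 m i j = a1 - a2 - g1 := by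
      have perm : ∀ m, A k m * br J1 DJ1 Γt1 m i j
          = A k m * DJ1 m i j - A k m * DJ1 m j i
            + A k m * ((∑ l, J1 m l * Γt1 l i j) - (∑ l, J1 m l * Γt1 l j i))
            - A k m * ((∑ l, Γt1 m i l * J1 l j) - (∑ l, Γt1 m j l * J1 l i)) := by
        intro m
        rw [br]
        have e1 : (∑ l, J1 l j * Γt1 m i l) = ∑ l, Γt1 m i l * J1 l j :=
          Finset.sum_congr rfl fun l _ => by ring
        have e2 : (∑ l, J1 l i * Γt1 m j l) = ∑ l, Γt1 m j l * J1 l i :=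
          Finset.sum_congr rfl fun l _ => by ring
        rw [← e1, ← e2]
        ring
      rw [Finset.sum_congr rfl fun m _ => perm m]
      rw [Finset.sum_sub_distrib, Finset.sum_add_distrib, Finset.sum_sub_distrib]
      have hz : ∀ m : Fin n, ((∑ l, J1 m l * Γt1 l i j) - (∑ l, J1 m l * Γt1 l j i)) = 0 := by
        intro m
        have e : (∑ l, J1 m l * Γt1 l i j) = ∑ l, J1 m l * Γt1 l j i :=
          Finset.sum_congr rfl fun l _ => by rw [hΓ1 l i j]
        rw [e, sub_self]
      have : (∑ m, A k m * ((∑ l, J1 m l * Γt1 l i j) - (∑ l, J1 m l * Γt1 l j i))) = 0 := by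
        refine Finset.sum_eq_zero fun m _ => ?_
        rw [hz m, mul_zero]
      rw [this, hg1, starG1]
      ring
    -- E2 in atoms
    have hE2 : (∑ m, ∑ l, br J2 DJ2 Γt2 k m l * A m i * A l j) = d1 - d2 - g2 := by
      have perm : ∀ m l, br J2 DJ2 Γt2 k m l * A m i * A l j
          = DJ2 k m l * A m i * A l j - DJ2 k l m * A m i * A l j
            + ((∑ a, J2 k a * Γt2 a m l) - (∑ a, J2 k a * Γt2 a l m)) * (A m i * A l j)
            - (A m i * A l j * ((∑ a, Γt2 k m a * J2 a l) - (∑ a, Γt2 k l a * J2 a m))) := by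
        intro m l
        rw [br]
        have e1 : (∑ a, J2 a l * Γt2 k m a) = ∑ a, Γt2 k m a * J2 a l :=
          Finset.sum_congr rfl fun a _ => by ring
        have e2 : (∑ a, J2 a m * Γt2 k l a) = ∑ a, Γt2 k l a * J2 a m :=
          Finset.sum_congr rfl fun a _ => by ring
        rw [← e1, ← e2]
        ring
      rw [Finset.sum_congr rfl fun m _ => Finset.sum_congr rfl fun l _ => perm m l]
      have hz : ∀ m l : Fin n,
          ((∑ a, J2 k a * Γt2 a m l) - (∑ a, J2 k a * Γt2 a l m)) * (A m i * A l j) = 0 := by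
        intro m l
        have e : (∑ a, J2 k a * Γt2 a m l) = ∑ a, J2 k a * Γt2 a l m :=
          Finset.sum_congr rfl fun a _ => by rw [hΓ2 a m l]
        rw [e, sub_self, zero_mul]
      have step : ∀ m, ∑ l, (DJ2 k m l * A m i * A l j - DJ2 k l m * A m i * A l j
            + ((∑ a, J2 k a * Γt2 a m l) - (∑ a, J2 k a * Γt2 a l m)) * (A m i * A l j)
            - (A m i * A l j * ((∑ a, Γt2 k m a * J2 a l) - (∑ a, Γt2 k l a * J2 a m))))
          = (∑ l, DJ2 k m l * A m i * A l j) - (∑ l, DJ2 k l m * A m i * A l j)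
            - ∑ l, A m i * A l j * ((∑ a, Γt2 k m a * J2 a l) - (∑ a, Γt2 k l a * J2 a m)) := by
        intro m
        have e : (∑ l, (DJ2 k m l * A m i * A l j - DJ2 k l m * A m i * A l j
            + ((∑ a, J2 k a * Γt2 a m l) - (∑ a, J2 k a * Γt2 a l m)) * (A m i * A l j)
            - (A m i * A l j * ((∑ a, Γt2 k m a * J2 a l) - (∑ a, Γt2 k l a * J2 a m)))))
            = ∑ l, (DJ2 k m l * A m i * A l j - DJ2 k l m * A m i * A l j
            - (A m i * A l j * ((∑ a, Γt2 k m a * J2 a l) - (∑ a, Γt2 k l a * J2 a m)))) :=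
          Finset.sum_congr rfl fun l _ => by rw [hz m l]; ring
        rw [e, Finset.sum_sub_distrib, Finset.sum_sub_distrib]
      rw [Finset.sum_congr rfl fun m _ => step m]
      rw [Finset.sum_sub_distrib, Finset.sum_sub_distrib]
      have hG2 : (∑ m, ∑ l, A m i * A l j * ((∑ a, Γt2 k m a * J2 a l)
          - (∑ a, Γt2 k l a * J2 a m))) = g2 := by
        rw [hg2, starG2]
      rw [hG2]
    -- CH in atoms
    have hCH1a : s1 + a1 = d1 + u1 := by
      have h := hCH k i j
      rw [Finset.sum_add_distrib, Finset.sum_add_distrib] at h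
      rw [ha1, hd1, hs1, hu1]
      convert h using 2
      refine (Finset.sum_congr rfl fun m _ => ?_).symm
      rw [Finset.sum_mul]
      exact Finset.sum_congr rfl fun b _ => by ring
    have hCH2a : s2 + a2 = d2 + u1 := by
      have h := hCH k j i
      rw [Finset.sum_add_distrib, Finset.sum_add_distrib] at h
      have hu2 : (∑ m, J2 k m * S m j i) = u1 := by
        rw [hu1]
        exact Finset.sum_congr rfl fun m _ => by rw [hS m j i]
      have hd2' : (∑ m, (∑ b, DJ2 k m b * A b i) * A m j) = d2 := by
        rw [hd2, Finset.sum_comm]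
        refine Finset.sum_congr rfl fun m _ => ?_
        rw [Finset.sum_mul]
      rw [hu2, hd2'] at h
      rw [ha2, hs2]
      exact h
    -- star in atoms
    have hstarL : starL A J1 S Γt1 k i j = -s2 + g1 := by
      rw [starL, hg1, hs2]
      congr 1
      rw [neg_inj]
      exact Finset.sum_congr rfl fun r _ => by rw [hS k r i]
    have hstarR : starR A J1 J2 S Γt2 k i j = g2 - s1 := by
      rw [starR, hg2, hs1]
      ring
    rw [hE1, hE2, hstarL, hstarR]
    constructor <;> intro h <;> linarith
  exact ⟨fun H k i j => (main k i j).mp (H k i j), fun H c w m => (main c w m).mpr (H c w m)⟩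

end L3

section RW
variable {A G J1 J2 : Matrix (Fin n) (Fin n) ℝ}
variable {S DG Γt1 Γt2 : Fin n → Fin n → Fin n → ℝ}
variable {p q X P : Fin n → ℝ}
variable (hp : ∀ j, p j = ∑ c, A c j * q c)

include hp in
lemma RW_T1 (i : Fin n) :
    ∑ j, (∑ r, DG r j i * (∑ s, J1 r s * X s)) * p j
      = ∑ c, ∑ m, q c * X m * T1 A J1 DG i c m := by
  calc ∑ j, (∑ r, DG r j i * (∑ s, J1 r s * X s)) * p j
      = ∑ j, ∑ c, ∑ r, ∑ s, q c * X s * (DG r j i * J1 r s * A c j) := by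
        refine Finset.sum_congr rfl fun j _ => ?_
        rw [hp j, Finset.mul_sum]
        refine Finset.sum_congr rfl fun c _ => ?_
        rw [Finset.sum_mul]
        refine Finset.sum_congr rfl fun r _ => ?_
        rw [Finset.mul_sum, Finset.sum_mul]
        exact Finset.sum_congr rfl fun s _ => by ring
    _ = ∑ c, ∑ s, ∑ j, ∑ r, q c * X s * (DG r j i * J1 r s * A c j) := by
        rw [sum4_12, sum4_34, sum4_23]
    _ = ∑ c, ∑ m, q c * X m * T1 A J1 DG i c m := by
        refine Finset.sum_congr rfl fun c _ => Finset.sum_congr rfl fun m _ => ?_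
        have : q c * X m * T1 A J1 DG i c m
            = ∑ j, ∑ r, q c * X m * (DG r j i * J1 r m * A c j) := by
          rw [T1, Finset.mul_sum]
          refine Finset.sum_congr rfl fun j _ => ?_
          rw [Finset.sum_mul, Finset.mul_sum]
        rw [this]

include hp in
lemma RW_T2 (i : Fin n) :
    ∑ j, G j i * (∑ s, (∑ k, p k * ((∑ l, Γt1 k j l * J1 l s)
        - (∑ l, Γt1 k s l * J1 l j))) * X s)
      = ∑ c, ∑ m, q c * X m * T2 A G J1 Γt1 i c m := by
  calc ∑ j, G j i * (∑ s, (∑ k, p k * ((∑ l, Γt1 k j l * J1 l s)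
        - (∑ l, Γt1 k s l * J1 l j))) * X s)
      = ∑ j, ∑ s, ∑ k, ∑ c, q c * X s * (G j i * (A c k *
          ((∑ l, Γt1 k j l * J1 l s) - (∑ l, Γt1 k s l * J1 l j)))) := by
        refine Finset.sum_congr rfl fun j _ => ?_
        rw [Finset.mul_sum]
        refine Finset.sum_congr rfl fun s _ => ?_
        rw [Finset.sum_mul, Finset.mul_sum]
        refine Finset.sum_congr rfl fun k _ => ?_
        rw [hp k, Finset.sum_mul, Finset.sum_mul, Finset.mul_sum]
        exact Finset.sum_congr rfl fun c _ => by ring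
    _ = ∑ c, ∑ s, ∑ j, ∑ k, q c * X s * (G j i * (A c k *
          ((∑ l, Γt1 k j l * J1 l s) - (∑ l, Γt1 k s l * J1 l j)))) := by
        rw [sum4_34, sum4_23, sum4_12, sum4_23]
    _ = ∑ c, ∑ m, q c * X m * T2 A G J1 Γt1 i c m := by
        refine Finset.sum_congr rfl fun c _ => Finset.sum_congr rfl fun m _ => ?_
        have : q c * X m * T2 A G J1 Γt1 i c m
            = ∑ j, ∑ k, q c * X m * (G j i * (A c k *
              ((∑ l, Γt1 k j l * J1 l m) - (∑ l, Γt1 k m l * J1 l j)))) := by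
          rw [T2, Finset.mul_sum]
          refine Finset.sum_congr rfl fun j _ => ?_
          rw [Finset.mul_sum, Finset.mul_sum]
        rw [this]

lemma RW_T3 (i : Fin n) :
    ∑ b, (∑ c, q c * ((∑ l, Γt2 c i l * J2 l b) - (∑ l, Γt2 c b l * J2 l i)))
        * (∑ s, A b s * X s)
      = ∑ c, ∑ m, q c * X m * T3 A J2 Γt2 i c m := by
  calc ∑ b, (∑ c, q c * ((∑ l, Γt2 c i l * J2 l b) - (∑ l, Γt2 c b l * J2 l i)))
        * (∑ s, A b s * X s)
      = ∑ b, ∑ c, ∑ s, q c * X s * (((∑ l, Γt2 c i l * J2 l b)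
          - (∑ l, Γt2 c b l * J2 l i)) * A b s) := by
        refine Finset.sum_congr rfl fun b _ => ?_
        rw [Finset.sum_mul]
        refine Finset.sum_congr rfl fun c _ => ?_
        rw [Finset.mul_sum]
        exact Finset.sum_congr rfl fun s _ => by ring
    _ = ∑ c, ∑ s, ∑ b, q c * X s * (((∑ l, Γt2 c i l * J2 l b)
          - (∑ l, Γt2 c b l * J2 l i)) * A b s) := by
        rw [sum3_12, sum3_23]
    _ = ∑ c, ∑ m, q c * X m * T3 A J2 Γt2 i c m := by
        refine Finset.sum_congr rfl fun c _ => Finset.sum_congr rfl fun m _ => ?_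
        have : q c * X m * T3 A J2 Γt2 i c m
            = ∑ b, q c * X m * (((∑ l, Γt2 c i l * J2 l b)
              - (∑ l, Γt2 c b l * J2 l i)) * A b m) := by
          rw [T3, Finset.mul_sum]
        rw [this]

include hp in
lemma RW_T4 (i : Fin n) :
    ∑ a, J2 a i * (∑ j, (∑ r, DG r j a * X r) * p j)
      = ∑ c, ∑ m, q c * X m * T4 A J2 DG i c m := by
  calc ∑ a, J2 a i * (∑ j, (∑ r, DG r j a * X r) * p j)
      = ∑ a, ∑ j, ∑ c, ∑ r, q c * X r * (J2 a i * (DG r j a * A c j)) := by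
        refine Finset.sum_congr rfl fun a _ => ?_
        rw [Finset.mul_sum]
        refine Finset.sum_congr rfl fun j _ => ?_
        rw [hp j, Finset.mul_sum, Finset.mul_sum]
        refine Finset.sum_congr rfl fun c _ => ?_
        rw [Finset.sum_mul, Finset.mul_sum]
        exact Finset.sum_congr rfl fun r _ => by ring
    _ = ∑ c, ∑ r, ∑ a, ∑ j, q c * X r * (J2 a i * (DG r j a * A c j)) := by
        rw [sum4_23, sum4_12, sum4_34, sum4_23]
    _ = ∑ c, ∑ m, q c * X m * T4 A J2 DG i c m := by
        refine Finset.sum_congr rfl fun c _ => Finset.sum_congr rfl fun m _ => ?_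
        have : q c * X m * T4 A J2 DG i c m
            = ∑ a, ∑ j, q c * X m * (J2 a i * (DG m j a * A c j)) := by
          rw [T4, Finset.mul_sum]
          refine Finset.sum_congr rfl fun a _ => ?_
          rw [Finset.mul_sum, Finset.mul_sum]
        rw [this]

lemma RW_P (hJ1G : J1 * G = G * J2) (i : Fin n) :
    ∑ j, G j i * (∑ s, J1 s j * P s) = ∑ a, J2 a i * (∑ j, G j a * P j) := by
  have hGJ : ∀ t w : Fin n, (∑ a, J1 t a * G a w) = ∑ a, G t a * J2 a w := by
    intro t w
    have h1 := congrFun (congrFun hJ1G t) w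
    simpa [Matrix.mul_apply] using h1
  calc ∑ j, G j i * (∑ s, J1 s j * P s)
      = ∑ j, ∑ s, J1 s j * G j i * P s := by
        refine Finset.sum_congr rfl fun j _ => ?_
        rw [Finset.mul_sum]
        exact Finset.sum_congr rfl fun s _ => by ring
    _ = ∑ s, ∑ j, J1 s j * G j i * P s := Finset.sum_comm
    _ = ∑ s, (∑ j, J1 s j * G j i) * P s := by
        refine Finset.sum_congr rfl fun s _ => ?_
        rw [Finset.sum_mul]
    _ = ∑ s, (∑ a, G s a * J2 a i) * P s :=
        Finset.sum_congr rfl fun s _ => by rw [hGJ s i]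
    _ = ∑ s, ∑ a, J2 a i * (G s a * P s) := by
        refine Finset.sum_congr rfl fun s _ => ?_
        rw [Finset.sum_mul]
        exact Finset.sum_congr rfl fun a _ => by ring
    _ = ∑ a, ∑ s, J2 a i * (G s a * P s) := Finset.sum_comm
    _ = ∑ a, J2 a i * (∑ j, G j a * P j) := by
        refine Finset.sum_congr rfl fun a _ => ?_
        rw [Finset.mul_sum]

/-- collapse of the double sum against basis vectors. -/
lemma double_single_collapse (T : Fin n → Fin n → ℝ) (c m : Fin n) :
    ∑ c', ∑ m', (Pi.single c (1:ℝ) : Fin n → ℝ) c' * (Pi.single m (1:ℝ) : Fin n → ℝ) m'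
      * T c' m' = T c m := by
  simp [Pi.single_apply, ite_mul, Finset.sum_ite_eq']

end RW
end S14a

namespace S14a

lemma hp_of_GA {n : ℕ} {A G : Matrix (Fin n) (Fin n) ℝ} (hGA : G * A = 1)
    (p : Fin n → ℝ) (j : Fin n) :
    p j = ∑ c, A c j * (∑ w, G w c * p w) := by
  symm
  calc ∑ c, A c j * (∑ w, G w c * p w)
      = ∑ c, ∑ w, A c j * (G w c * p w) := by
        exact Finset.sum_congr rfl fun c _ => by rw [Finset.mul_sum]
    _ = ∑ w, (∑ c, G w c * A c j) * p w := by
        rw [Finset.sum_comm]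
        refine Finset.sum_congr rfl fun w _ => ?_
        rw [Finset.sum_mul]
        exact Finset.sum_congr rfl fun c _ => by ring
    _ = p j := by
      have h1 : ∀ w, (∑ c, G w c * A c j) = if w = j then (1:ℝ) else 0 := fun w => by
        rw [← Matrix.mul_apply, hGA, Matrix.one_apply]
      simp [h1]

end S14a

namespace S14

variable {n : ℕ} {U V : Set (Fin n → ℝ)} {f g : (Fin n → ℝ) → (Fin n → ℝ)}

lemma Ppoint_iff (hU : IsOpen U) (hV : IsOpen V) (hf : ContDiffOn ℝ (⊤ : ℕ∞) f U)
    (hg : ContDiffOn ℝ (⊤ : ℕ∞) g V) (hfU : Set.MapsTo f U V) (hgV : Set.MapsTo g V U)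
    (hgf : ∀ y ∈ U, g (f y) = y) (hfg : ∀ z ∈ V, f (g z) = z)
    (J₁ J₂ : (Fin n → ℝ) → Matrix (Fin n) (Fin n) ℝ)
    (Γ₁ Γ₂ : (Fin n → ℝ) → Fin n → Fin n → Fin n → ℝ)
    {x : Fin n → ℝ} (hx : x ∈ U) :
    (∀ (p : Fin n → ℝ) (v : (Fin n → ℝ) × (Fin n → ℝ)),
        fderiv ℝ (cotLift f) (x, p) (JHmap J₁ Γ₁ x p v) =
          JHmap J₂ Γ₂ (f x) (((Dmat f x)⁻¹)ᵀ.mulVec p)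
            (fderiv ℝ (cotLift f) (x, p) v)) ↔
      ((Dmat f x * J₁ x = J₂ (f x) * Dmat f x) ∧
        ∀ i c m : Fin n,
          S14a.T1 (Dmat f x) (J₁ x)
              (fun r j i => pd (fun y => Dmat g (f y) j i) r x) i c m
            + S14a.T2 (Dmat f x) (Dmat g (f x)) (J₁ x)
              (fun k i j => symCh Γ₁ x k i j) i c m
          = S14a.T3 (Dmat f x) (J₂ (f x)) (fun k i j => symCh Γ₂ (f x) k i j) i c m
            + S14a.T4 (Dmat f x) (J₂ (f x))
              (fun r j i => pd (fun y => Dmat g (f y) j i) r x) i c m) := by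
  classical
  have hAG : Dmat f x * Dmat g (f x) = 1 := by
    have := Dmat_left_inv hV (hfU hx) (diffAt_vec hV hg (hfU hx))
      (by rw [hgf x hx]; exact diffAt_vec hU hf hx) hfg
    rwa [hgf x hx] at this
  have hGA : Dmat g (f x) * Dmat f x = 1 :=
    Dmat_left_inv hU hx (diffAt_vec hU hf hx) (diffAt_vec hV hg (hfU hx)) hgf
  have hinv : (Dmat f x)⁻¹ = Dmat g (f x) := Matrix.inv_eq_right_inv hAG
  have hfd := fderiv_cotLift hU hV hf hg hfU hgV hgf hfg hx
  constructor
  · intro H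
    have hi : Dmat f x * J₁ x = J₂ (f x) * Dmat f x := by
      ext k j
      have h := H 0 (Pi.single j 1, 0)
      rw [hfd, hfd, hinv] at h
      have h1 := congrFun (congrArg Prod.fst h) k
      simp only [JHmap] at h1
      rw [Matrix.mulVec_mulVec, Matrix.mulVec_mulVec, Matrix.mulVec_single,
        Matrix.mulVec_single] at h1
      simpa using h1
    refine ⟨hi, ?_⟩
    intro i c m
    have h := H (fun w => Dmat f x c w) (Pi.single m 1, 0)
    rw [hfd, hfd, hinv] at h
    have h2 := congrFun (congrArg Prod.snd h) i
    simp only [JHmap, Matrix.mulVec, dotProduct, Cblock, Matrix.of_apply,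
      Matrix.transpose_apply, Pi.add_apply, Pi.zero_apply, mul_zero,
      Finset.sum_const_zero, add_zero, mul_add, Finset.sum_add_distrib] at h2
    have hqk : ∀ k, (∑ w, Dmat g (f x) w k * Dmat f x c w)
        = (Pi.single c (1:ℝ) : Fin n → ℝ) k := by
      intro k
      have : (∑ w, Dmat f x c w * Dmat g (f x) w k) = (1 : Matrix (Fin n) (Fin n) ℝ) c k := by
        rw [← Matrix.mul_apply, hAG]
      rw [Finset.sum_congr rfl fun w _ => mul_comm (Dmat g (f x) w k) (Dmat f x c w), this,
        Matrix.one_apply, Pi.single_apply]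
      simp [eq_comm]
    simp only [hqk] at h2
    have hp1 : ∀ j, Dmat f x c j
        = ∑ c', Dmat f x c' j * (Pi.single c (1:ℝ) : Fin n → ℝ) c' := by
      intro j
      simp [Pi.single_apply, mul_ite]
    rw [S14a.RW_T1 (A := Dmat f x) (J1 := J₁ x)
          (DG := fun r j i => pd (fun y => Dmat g (f y) j i) r x)
          (p := fun w => Dmat f x c w) (q := (Pi.single c 1 : Fin n → ℝ))
          (X := (Pi.single m 1 : Fin n → ℝ)) hp1 i,
        S14a.RW_T2 (A := Dmat f x) (G := Dmat g (f x)) (J1 := J₁ x)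
          (Γt1 := fun k i j => symCh Γ₁ x k i j)
          (p := fun w => Dmat f x c w) (q := (Pi.single c 1 : Fin n → ℝ))
          (X := (Pi.single m 1 : Fin n → ℝ)) hp1 i,
        S14a.RW_T3 (A := Dmat f x) (J2 := J₂ (f x))
          (Γt2 := fun k i j => symCh Γ₂ (f x) k i j)
          (q := (Pi.single c 1 : Fin n → ℝ)) (X := (Pi.single m 1 : Fin n → ℝ)) i,
        S14a.RW_T4 (A := Dmat f x) (J2 := J₂ (f x))
          (DG := fun r j i => pd (fun y => Dmat g (f y) j i) r x)
          (p := fun w => Dmat f x c w) (q := (Pi.single c 1 : Fin n → ℝ))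
          (X := (Pi.single m 1 : Fin n → ℝ)) hp1 i] at h2
    rw [S14a.double_single_collapse, S14a.double_single_collapse,
      S14a.double_single_collapse, S14a.double_single_collapse] at h2
    exact h2
  · rintro ⟨hi, hT⟩ p v
    have hJ1G : J₁ x * Dmat g (f x) = Dmat g (f x) * J₂ (f x) := by
      have e1 : Dmat g (f x) * (Dmat f x * J₁ x) * Dmat g (f x) = J₁ x * Dmat g (f x) := by
        rw [← mul_assoc, hGA, one_mul]
      have e2 : Dmat g (f x) * (J₂ (f x) * Dmat f x) * Dmat g (f x)
          = Dmat g (f x) * J₂ (f x) := by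
        rw [← mul_assoc, mul_assoc, hAG, mul_one]
      rw [← e1, hi, e2]
    rw [hfd, hfd, hinv]
    simp only [JHmap]
    refine Prod.ext ?_ ?_
    · show Dmat f x *ᵥ (J₁ x *ᵥ v.1) = J₂ (f x) *ᵥ (Dmat f x *ᵥ v.1)
      rw [Matrix.mulVec_mulVec, Matrix.mulVec_mulVec, hi]
    · show (fun i => _) = (fun i => _)
      funext i
      simp only [Matrix.mulVec, dotProduct, Cblock, Matrix.of_apply,
        Matrix.transpose_apply, Pi.add_apply, mul_add, Finset.sum_add_distrib]
      have hp2 : ∀ j, p j = ∑ c, Dmat f x c j * (∑ w, Dmat g (f x) w c * p w) :=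
        S14a.hp_of_GA hGA p
      rw [S14a.RW_T1 (A := Dmat f x) (J1 := J₁ x)
            (DG := fun r j i => pd (fun y => Dmat g (f y) j i) r x)
            (p := p) (q := fun k => ∑ w, Dmat g (f x) w k * p w)
            (X := v.1) hp2 i,
          S14a.RW_T2 (A := Dmat f x) (G := Dmat g (f x)) (J1 := J₁ x)
            (Γt1 := fun k i j => symCh Γ₁ x k i j)
            (p := p) (q := fun k => ∑ w, Dmat g (f x) w k * p w)
            (X := v.1) hp2 i,
          S14a.RW_T3 (A := Dmat f x) (J2 := J₂ (f x))
            (Γt2 := fun k i j => symCh Γ₂ (f x) k i j)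
            (q := fun k => ∑ w, Dmat g (f x) w k * p w) (X := v.1) i,
          S14a.RW_T4 (A := Dmat f x) (J2 := J₂ (f x))
            (DG := fun r j i => pd (fun y => Dmat g (f y) j i) r x)
            (p := p) (q := fun k => ∑ w, Dmat g (f x) w k * p w)
            (X := v.1) hp2 i,
          S14a.RW_P (G := Dmat g (f x)) (P := v.2) hJ1G i]
      have comb : ∀ (F F' : Fin n → Fin n → ℝ),
          (∑ c', ∑ m', F c' m') + (∑ c', ∑ m', F' c' m')
            = ∑ c', ∑ m', (F c' m' + F' c' m') := fun F F' => by
        rw [← Finset.sum_add_distrib]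
        exact Finset.sum_congr rfl fun c' _ => by rw [← Finset.sum_add_distrib]
      have key : (∑ c', ∑ m', (fun k => ∑ w, Dmat g (f x) w k * p w) c' * v.1 m'
            * S14a.T1 (Dmat f x) (J₁ x)
              (fun r j i => pd (fun y => Dmat g (f y) j i) r x) i c' m')
          + (∑ c', ∑ m', (fun k => ∑ w, Dmat g (f x) w k * p w) c' * v.1 m'
            * S14a.T2 (Dmat f x) (Dmat g (f x)) (J₁ x)
              (fun k i j => symCh Γ₁ x k i j) i c' m')
          = (∑ c', ∑ m', (fun k => ∑ w, Dmat g (f x) w k * p w) c' * v.1 m'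
            * S14a.T3 (Dmat f x) (J₂ (f x))
              (fun k i j => symCh Γ₂ (f x) k i j) i c' m')
          + (∑ c', ∑ m', (fun k => ∑ w, Dmat g (f x) w k * p w) c' * v.1 m'
            * S14a.T4 (Dmat f x) (J₂ (f x))
              (fun r j i => pd (fun y => Dmat g (f y) j i) r x) i c' m') := by
        rw [comb, comb]
        refine Finset.sum_congr rfl fun c' _ => Finset.sum_congr rfl fun m' _ => ?_
        rw [← mul_add, ← mul_add, hT i c' m']
      linarith [key]

end S14

/-- the cotangent lift `f̃` of a smooth diffeomorphism
`f : (U,J₁,∇₁) → (V,J₂,∇₂)` is `(J₁^{H,∇₁}, J₂^{H,∇₂})`-holomorphic iff `f` is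
`(J₁,J₂)`-holomorphic and `f_*[∇̃₁J₁] = [∇̃₂J₂]`. -/
theorem statement14 (n : ℕ) (U V : Set (Fin n → ℝ)) (hU : IsOpen U) (hV : IsOpen V)
    (f g : (Fin n → ℝ) → (Fin n → ℝ))
    (hf : ContDiffOn ℝ (⊤ : ℕ∞) f U) (hg : ContDiffOn ℝ (⊤ : ℕ∞) g V)
    (hfU : Set.MapsTo f U V) (hgV : Set.MapsTo g V U)
    (hgf : ∀ x ∈ U, g (f x) = x) (hfg : ∀ y ∈ V, f (g y) = y)
    (J₁ J₂ : (Fin n → ℝ) → Matrix (Fin n) (Fin n) ℝ)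
    (Γ₁ Γ₂ : (Fin n → ℝ) → Fin n → Fin n → Fin n → ℝ)
    (hJ₁smooth : ∀ k j : Fin n, ContDiffOn ℝ (⊤ : ℕ∞) (fun x => J₁ x k j) U)
    (hJ₂smooth : ∀ k j : Fin n, ContDiffOn ℝ (⊤ : ℕ∞) (fun x => J₂ x k j) V)
    (hΓ₁smooth : ∀ k i j : Fin n, ContDiffOn ℝ (⊤ : ℕ∞) (fun x => Γ₁ x k i j) U)
    (hΓ₂smooth : ∀ k i j : Fin n, ContDiffOn ℝ (⊤ : ℕ∞) (fun x => Γ₂ x k i j) V)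
    (hJ₁ : ∀ x ∈ U, J₁ x * J₁ x = -1) (hJ₂ : ∀ y ∈ V, J₂ y * J₂ y = -1) :
    (∀ x ∈ U, ∀ (p : Fin n → ℝ) (v : (Fin n → ℝ) × (Fin n → ℝ)),
        fderiv ℝ (cotLift f) (x, p) (JHmap J₁ Γ₁ x p v) =
          JHmap J₂ Γ₂ (f x) (((Dmat f x)⁻¹)ᵀ.mulVec p)
            (fderiv ℝ (cotLift f) (x, p) v)) ↔
      ((∀ x ∈ U, Dmat f x * J₁ x = J₂ (f x) * Dmat f x) ∧
        (∀ x ∈ U, ∀ k i j : Fin n,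
          ∑ m, Dmat f x k m * brNablaTildeJ J₁ Γ₁ x m i j =
            ∑ m, ∑ l, brNablaTildeJ J₂ Γ₂ (f x) k m l * Dmat f x m i * Dmat f x l j)) := by
  classical
  -- per-point equivalence between the dagger condition and the bracket condition,
  -- valid whenever `f` is holomorphic on all of `U`
  have bridge : (∀ x ∈ U, Dmat f x * J₁ x = J₂ (f x) * Dmat f x) →
      ∀ x, x ∈ U →
      ((∀ i c m : Fin n,
          S14a.T1 (Dmat f x) (J₁ x)
              (fun r j i => pd (fun y => Dmat g (f y) j i) r x) i c m
            + S14a.T2 (Dmat f x) (Dmat g (f x)) (J₁ x)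
              (fun k i j => symCh Γ₁ x k i j) i c m
          = S14a.T3 (Dmat f x) (J₂ (f x)) (fun k i j => symCh Γ₂ (f x) k i j) i c m
            + S14a.T4 (Dmat f x) (J₂ (f x))
              (fun r j i => pd (fun y => Dmat g (f y) j i) r x) i c m) ↔
        (∀ k i j : Fin n,
          ∑ m, Dmat f x k m * brNablaTildeJ J₁ Γ₁ x m i j =
            ∑ m, ∑ l, brNablaTildeJ J₂ Γ₂ (f x) k m l * Dmat f x m i * Dmat f x l j)) := by
    intro hi x hx
    have hAG : Dmat f x * Dmat g (f x) = 1 := by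
      have := S14.Dmat_left_inv hV (hfU hx) (S14.diffAt_vec hV hg (hfU hx))
        (by rw [hgf x hx]; exact S14.diffAt_vec hU hf hx) hfg
      rwa [hgf x hx] at this
    have hGA : Dmat g (f x) * Dmat f x = 1 :=
      S14.Dmat_left_inv hU hx (S14.diffAt_vec hU hf hx) (S14.diffAt_vec hV hg (hfU hx)) hgf
    have hJ1G : J₁ x * Dmat g (f x) = Dmat g (f x) * J₂ (f x) := by
      have e1 : Dmat g (f x) * (Dmat f x * J₁ x) * Dmat g (f x) = J₁ x * Dmat g (f x) := by
        rw [← mul_assoc, hGA, one_mul]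
      have e2 : Dmat g (f x) * (J₂ (f x) * Dmat f x) * Dmat g (f x)
          = Dmat g (f x) * J₂ (f x) := by
        rw [← mul_assoc, mul_assoc, hAG, mul_one]
      rw [← e1, hi x hx, e2]
    have hDG : ∀ r j i : Fin n, pd (fun y => Dmat g (f y) j i) r x
        = -∑ l, ∑ μ, Dmat g (f x) j μ * pd (fun y => Dmat f y μ l) r x * Dmat g (f x) l i :=
      fun r j i => S14.pd_Gent hU hV hf hg hfU hgf hfg hx r j i
    have hS : ∀ a b r : Fin n, pd (fun y => Dmat f y a b) r x
        = pd (fun y => Dmat f y a r) b x := fun a b r => S14.S_symm hU hf hx a b r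
    have hΓ1 : ∀ k i j : Fin n, symCh Γ₁ x k i j = symCh Γ₁ x k j i := by
      intro k i j; unfold symCh; ring
    have hΓ2 : ∀ k i j : Fin n, symCh Γ₂ (f x) k i j = symCh Γ₂ (f x) k j i := by
      intro k i j; unfold symCh; ring
    have hCH := S14.CH hU hV hf hfU hJ₁smooth hJ₂smooth hi hx
    have h1 := S14a.dagger_iff_star (S := fun a b r => pd (fun y => Dmat f y a b) r x)
      (Γt1 := fun k i j => symCh Γ₁ x k i j) (Γt2 := fun k i j => symCh Γ₂ (f x) k i j)
      hAG hGA hDG hJ1G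
    have h2 := S14a.star_iff_B (A := Dmat f x)
      (DJ1 := fun a b r => pd (fun y => J₁ y a b) r x)
      (DJ2 := fun a b c => pd (fun z => J₂ z a b) c (f x))
      hS hΓ1 hΓ2 hCH
    refine (h1.trans h2).trans ?_
    exact Iff.rfl
  constructor
  · intro H
    have hi : ∀ x ∈ U, Dmat f x * J₁ x = J₂ (f x) * Dmat f x := fun x hx =>
      ((S14.Ppoint_iff hU hV hf hg hfU hgV hgf hfg J₁ J₂ Γ₁ Γ₂ hx).mp (H x hx)).1
    refine ⟨hi, fun x hx => ?_⟩
    exact (bridge hi x hx).mp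
      ((S14.Ppoint_iff hU hV hf hg hfU hgV hgf hfg J₁ J₂ Γ₁ Γ₂ hx).mp (H x hx)).2
  · rintro ⟨hi, hB⟩ x hx
    exact (S14.Ppoint_iff hU hV hf hg hfU hgV hgf hfg J₁ J₂ Γ₁ Γ₂ hx).mpr
      ⟨hi x hx, (bridge hi x hx).mpr (hB x hx)⟩
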